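/- For θ > 1, the supremum over graphs G with maximum clique size k and unit-ℓ¹-norm vectors f of Σ_{i∼j} |f_i|^θ|f_j|^θ equals φ_θ(k), i.e., the supremum is attained when G is the complete graph on k vertices. -/

import Mathlib

/-!
Write `p = a ^ θ` for a weight vector `a ≥ 0`, so the objective is the quadratic form
`p ⬝ᵥ A p` of the adjacency matrix `A` of `G`. If `i, j` are non-adjacent vertices in the support
of `a`, the form contains none of `p i * p j`, `p i ^ 2`, `p j ^ 2`, so it is affine in
`(p i, p j)`; moving all of `a j` onto `i`, where `i` has the larger neighbourhood weight
`(A p) i`, does not decrease it, since `(a i + a j) ^ θ ≥ a i ^ θ + a j ^ θ` for `θ ≥ 1`.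
Repeating this shrinks the support until it is a clique, hence has at most `k` vertices, and then
the value is at most the complete-graph sum on `k` vertices, i.e. `φ_θ(k)`. Conversely, the
complete graph on `k` vertices realises every value in the definition of `φ_θ(k)`.
-/

open scoped Classical

/-- `φ_θ(k) = sup { ∑_{i ≠ j} |v i|^θ |v j|^θ : v ∈ ℝ^k, ‖v‖₁ = 1 }`. -/
noncomputable def phiVar (θ : ℝ) (k : ℕ) : ℝ :=
  ⨆ v : {v : Fin k → ℝ // ∑ i, |v i| = 1},
    ∑ i : Fin k, ∑ j : Fin k, if i ≠ j then |v.1 i| ^ θ * |v.1 j| ^ θ else 0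

/-- `φ̂_θ(k)`: the supremum over all finite graphs `G` with maximum clique size `k` and
vectors `f` of unit `ℓ¹`-norm of `∑_{i ∼ j} |f i|^θ |f j|^θ` (ordered adjacent pairs). -/
noncomputable def phiHat (θ : ℝ) (k : ℕ) : ℝ :=
  sSup {x : ℝ | ∃ (m : ℕ) (G : SimpleGraph (Fin m)) (f : Fin m → ℝ),
    (∃ s : Finset (Fin m), G.IsNClique k s) ∧
    (∀ s : Finset (Fin m), G.IsClique (s : Set (Fin m)) → s.card ≤ k) ∧
    (∑ i, |f i| = 1) ∧
    x = ∑ i : Fin m, ∑ j : Fin m,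
      if G.Adj i j then |f i| ^ θ * |f j| ^ θ else 0}

open Finset Matrix

section SumTransfer

variable {V : Type*} [Fintype V]

theorem sum_sum_ite_ne_mul [DecidableEq V] (x : V → ℝ) :
    ∑ i, ∑ j, (if i ≠ j then x i * x j else 0) = (∑ i, x i) ^ 2 - ∑ i, x i ^ 2 := by
  rw [sq, sum_mul_sum, ← sum_sub_distrib]
  refine sum_congr rfl fun i _ => ?_
  rw [← sum_filter, filter_ne, sum_erase_eq_sub (mem_univ i), sq]

theorem exists_fin_sum_comp_eq {k : ℕ} (a : V → ℝ) (ha : #{x | a x ≠ 0} ≤ k) :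
    ∃ v : Fin k → ℝ, ∀ g : ℝ → ℝ, g 0 = 0 → ∑ t, g (v t) = ∑ x, g (a x) := by
  set s : Finset V := {x | a x ≠ 0}
  let e : s ↪ Fin k := s.equivFin.toEmbedding.trans (Fin.castLEEmb ha)
  refine ⟨Function.extend e (fun x => a x) 0, fun g hg => ?_⟩
  calc ∑ t, g (Function.extend e (fun x => a x) 0 t)
      = ∑ x : s, g (a x) :=
        (Fintype.sum_of_injective e e.injective _ _
          (fun t ht => by rw [Function.extend_apply' _ _ _ (by simpa using ht), Pi.zero_apply, hg])
          (fun x => by rw [e.injective.extend_apply])).symm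
    _ = ∑ x ∈ s, g (a x) := sum_coe_sort s (fun x => g (a x))
    _ = ∑ x, g (a x) := sum_subset (subset_univ s) fun x _ hx => by
        rw [show a x = 0 by simpa [s] using hx, hg]

end SumTransfer

theorem bddAbove_range_phiVar {θ : ℝ} (hθ : 0 ≤ θ) (k : ℕ) :
    BddAbove (Set.range fun v : {v : Fin k → ℝ // ∑ i, |v i| = 1} =>
      ∑ i : Fin k, ∑ j : Fin k, if i ≠ j then |v.1 i| ^ θ * |v.1 j| ^ θ else 0) := by
  refine ⟨(k : ℝ) * k, ?_⟩
  rintro _ ⟨⟨v, hv⟩, rfl⟩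
  have hle : ∀ i, |v i| ^ θ ≤ 1 := fun i => Real.rpow_le_one (abs_nonneg _)
    (hv ▸ single_le_sum (fun j _ => abs_nonneg (v j)) (mem_univ i)) hθ
  calc (∑ i : Fin k, ∑ j : Fin k, if i ≠ j then |v i| ^ θ * |v j| ^ θ else 0)
      ≤ ∑ _i : Fin k, ∑ _j : Fin k, (1 : ℝ) := by
        gcongr with i _ j _
        split_ifs
        · exact mul_le_one₀ (hle i) (by positivity) (hle j)
        · exact zero_le_one
    _ = (k : ℝ) * k := by simp

theorem phiVar_nonneg (θ : ℝ) (k : ℕ) : 0 ≤ phiVar θ k :=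
  Real.iSup_nonneg fun _ => sum_nonneg fun _ _ => sum_nonneg fun _ _ => by
    split_ifs <;> positivity

theorem sum_sum_ite_ne_rpow_le_phiVar {V : Type*} [Fintype V] {θ : ℝ} (hθ : 0 < θ) {k : ℕ}
    (a : V → ℝ) (ha : ∑ x, |a x| = 1) (hsupp : #{x | a x ≠ 0} ≤ k) :
    ∑ i, ∑ j, (if i ≠ j then |a i| ^ θ * |a j| ^ θ else 0) ≤ phiVar θ k := by
  obtain ⟨v, hv⟩ := exists_fin_sum_comp_eq a hsupp
  have hv1 : ∑ t, |v t| = 1 := (hv _ abs_zero).trans ha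
  -- The off-diagonal sum is `(∑ p) ^ 2 - ∑ p ^ 2`, so only single sums have to be transported.
  calc ∑ i, ∑ j, (if i ≠ j then |a i| ^ θ * |a j| ^ θ else 0)
      = ∑ s, ∑ t, (if s ≠ t then |v s| ^ θ * |v t| ^ θ else 0) := by
        rw [sum_sum_ite_ne_mul, sum_sum_ite_ne_mul]
        have h0 : |(0 : ℝ)| ^ θ = 0 := by rw [abs_zero, Real.zero_rpow hθ.ne']
        rw [hv (fun y => |y| ^ θ) h0, hv (fun y => (|y| ^ θ) ^ 2) (by rw [h0]; ring)]
    _ ≤ phiVar θ k := le_ciSup (bddAbove_range_phiVar hθ.le k) ⟨v, hv1⟩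

namespace SimpleGraph

variable {V : Type*} [Fintype V] (G : SimpleGraph V) [DecidableRel G.Adj]

theorem dotProduct_adjMatrix_mulVec_add_of_not_adj {i j : V} (hij : i ≠ j) (hadj : ¬G.Adj i j)
    (p w : V → ℝ) (hw : ∀ v, v ≠ i ∧ v ≠ j → w v = 0) :
    (p + w) ⬝ᵥ G.adjMatrix ℝ *ᵥ (p + w) = p ⬝ᵥ G.adjMatrix ℝ *ᵥ p
      + 2 * (w i * (G.adjMatrix ℝ *ᵥ p) i + w j * (G.adjMatrix ℝ *ᵥ p) j) := by
  have hpair : ∀ u : V → ℝ, w ⬝ᵥ u = w i * u i + w j * u j := fun u =>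
    Fintype.sum_eq_add i j hij fun v hv => by rw [hw v hv, zero_mul]
  have hsymm : p ⬝ᵥ G.adjMatrix ℝ *ᵥ w = w ⬝ᵥ G.adjMatrix ℝ *ᵥ p := by
    rw [dotProduct_mulVec, dotProduct_comm, ← vecMul_transpose, transpose_adjMatrix]
  have hAw : ∀ l, ¬G.Adj l i → ¬G.Adj l j → (G.adjMatrix ℝ *ᵥ w) l = 0 := fun l hli hlj => by
    rw [adjMatrix_mulVec_apply]
    refine sum_eq_zero fun u hu => ?_
    have hlu : G.Adj l u := (G.mem_neighborFinset l u).1 hu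
    exact hw u ⟨fun h => hli (h ▸ hlu), fun h => hlj (h ▸ hlu)⟩
  have hww : w ⬝ᵥ G.adjMatrix ℝ *ᵥ w = 0 := by
    rw [hpair, hAw i (G.irrefl) hadj, hAw j (fun h => hadj h.symm) (G.irrefl)]
    ring
  rw [mulVec_add, dotProduct_add, add_dotProduct, add_dotProduct, hsymm, hww, hpair]
  ring

theorem dotProduct_adjMatrix_mulVec_le_of_not_adj {i j : V} (hij : i ≠ j) (hadj : ¬G.Adj i j)
    {p q : V → ℝ} (hp : 0 ≤ p) (hS : (G.adjMatrix ℝ *ᵥ p) j ≤ (G.adjMatrix ℝ *ᵥ p) i)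
    (hqi : p i + p j ≤ q i) (hqj : q j = 0) (hq : ∀ v, v ≠ i ∧ v ≠ j → q v = p v) :
    p ⬝ᵥ G.adjMatrix ℝ *ᵥ p ≤ q ⬝ᵥ G.adjMatrix ℝ *ᵥ q := by
  have hSj : 0 ≤ (G.adjMatrix ℝ *ᵥ p) j := by
    rw [adjMatrix_mulVec_apply]
    exact sum_nonneg fun v _ => hp v
  rw [show q = p + (q - p) by abel,
    G.dotProduct_adjMatrix_mulVec_add_of_not_adj hij hadj p (q - p)
      fun v hv => sub_eq_zero.2 (hq v hv)]
  simp only [Pi.sub_apply, hqj, zero_sub, le_add_iff_nonneg_right]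
  have hpj : p j ≤ q i - p i := le_sub_iff_add_le'.2 hqi
  nlinarith [mul_le_mul hpj hS hSj ((hp j).trans hpj)]

theorem sum_sum_ite_adj_le_sum_sum_ite_ne {p : V → ℝ} (hp : 0 ≤ p) :
    ∑ i, ∑ j, (if G.Adj i j then p i * p j else 0)
      ≤ ∑ i, ∑ j, (if i ≠ j then p i * p j else 0) := by
  gcongr with i _ j _
  by_cases h : G.Adj i j
  · rw [if_pos h, if_pos (G.ne_of_adj h)]
  · rw [if_neg h]
    split_ifs
    exacts [mul_nonneg (hp i) (hp j), le_rfl]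

theorem exists_card_support_lt_of_not_adj {θ : ℝ} (hθ : 1 ≤ θ) {a : V → ℝ} (ha : 0 ≤ a)
    {i j : V} (hi : a i ≠ 0) (hj : a j ≠ 0) (hij : i ≠ j) (hadj : ¬G.Adj i j) :
    ∃ b : V → ℝ, 0 ≤ b ∧ ∑ x, b x = ∑ x, a x ∧ #{x | b x ≠ 0} < #{x | a x ≠ 0} ∧
      ∑ i, ∑ j, (if G.Adj i j then a i ^ θ * a j ^ θ else 0)
        ≤ ∑ i, ∑ j, (if G.Adj i j then b i ^ θ * b j ^ θ else 0) := by
  wlog hS : (G.adjMatrix ℝ *ᵥ fun x => a x ^ θ) j ≤ (G.adjMatrix ℝ *ᵥ fun x => a x ^ θ) i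
    generalizing i j
  · exact this hj hi hij.symm (fun h => hadj h.symm) (le_of_not_ge hS)
  set b := Function.update (Function.update a j 0) i (a i + a j)
  have hbi : b i = a i + a j := by simp [b]
  have hbj : b j = 0 := by simp [b, hij.symm]
  have hb : ∀ v, v ≠ i ∧ v ≠ j → b v = a v := fun v hv => by simp [b, hv.1, hv.2]
  have hsupp : ({x | b x ≠ 0} : Finset V) ⊆ ({x | a x ≠ 0} : Finset V) := by
    intro v hv
    rcases eq_or_ne v i with rfl | hvi
    · simpa using hi
    rcases eq_or_ne v j with rfl | hvj
    · simp [hbj] at hv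
    · simpa [hb v ⟨hvi, hvj⟩] using hv
  refine ⟨b, fun v => ?_, ?_, card_lt_card ((ssubset_iff_of_subset hsupp).2 ⟨j, ?_⟩), ?_⟩
  · simp only [Pi.zero_apply, b, Function.update_apply]
    split_ifs
    exacts [add_nonneg (ha i) (ha j), le_rfl, ha v]
  · rw [← sub_eq_zero, ← sum_sub_distrib, Fintype.sum_eq_add i j hij
      fun v hv => by rw [hb v hv, sub_self], hbi, hbj]
    ring
  · simp [hj, hbj]
  · rw [← dotProduct_mulVec_adjMatrix, ← dotProduct_mulVec_adjMatrix]
    refine G.dotProduct_adjMatrix_mulVec_le_of_not_adj hij hadj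
      (fun x => Real.rpow_nonneg (ha x) θ) hS ?_ ?_ fun v hv => by rw [hb v hv]
    · rw [hbi]
      exact Real.add_rpow_le_rpow_add (ha i) (ha j) hθ
    · rw [hbj, Real.zero_rpow (by linarith)]

theorem sum_sum_ite_adj_rpow_le_phiVar {θ : ℝ} (hθ : 1 ≤ θ) {k : ℕ}
    (hG : ∀ s : Finset V, G.IsClique (s : Set V) → #s ≤ k) (a : V → ℝ) (ha : 0 ≤ a)
    (h1 : ∑ x, a x = 1) :
    ∑ i, ∑ j, (if G.Adj i j then a i ^ θ * a j ^ θ else 0) ≤ phiVar θ k := by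
  induction hn : #{x | a x ≠ 0} using Nat.strong_induction_on generalizing a with
  | _ n ih =>
  set s : Finset V := {x | a x ≠ 0}
  by_cases hcl : G.IsClique (s : Set V)
  · calc ∑ i, ∑ j, (if G.Adj i j then a i ^ θ * a j ^ θ else 0)
        ≤ ∑ i, ∑ j, (if i ≠ j then |a i| ^ θ * |a j| ^ θ else 0) := by
          simp only [abs_of_nonneg (ha _)]
          exact G.sum_sum_ite_adj_le_sum_sum_ite_ne fun x => Real.rpow_nonneg (ha x) θ
      _ ≤ phiVar θ k := sum_sum_ite_ne_rpow_le_phiVar (by linarith) a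
          (by simpa only [abs_of_nonneg (ha _)] using h1) (hG s hcl)
  obtain ⟨i, hi, j, hj, hij, hadj⟩ : ∃ i ∈ s, ∃ j ∈ s, i ≠ j ∧ ¬G.Adj i j := by
    simpa [IsClique, Set.Pairwise] using hcl
  obtain ⟨b, hb, hb1, hlt, hle⟩ := G.exists_card_support_lt_of_not_adj hθ ha
    (by simpa [s] using hi) (by simpa [s] using hj) hij hadj
  exact hle.trans (ih _ (hn ▸ hlt) b hb (hb1.trans h1) rfl)

end SimpleGraph

theorem phiHat_eq_phiVar_general (θ : ℝ) (hθ : 1 < θ) (k : ℕ) :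
    phiHat θ k = phiVar θ k := by
  refine le_antisymm (Real.sSup_le ?ub (phiVar_nonneg θ k))
    (Real.iSup_le (fun v => le_csSup ⟨phiVar θ k, ?ub⟩ ?_) (Real.sSup_nonneg ?_))
  case ub =>
    rintro _ ⟨m, G, f, -, hG, hf, rfl⟩
    exact G.sum_sum_ite_adj_rpow_le_phiVar hθ.le hG (fun i => |f i|) (fun i => abs_nonneg _) hf
  · refine ⟨k, ⊤, v.1, ⟨univ, ⟨by simp, by simp⟩⟩, fun s _ => ?_, v.2, by simp⟩
    simpa using card_le_univ s
  · rintro _ ⟨m, G, f, -, -, -, rfl⟩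
    exact sum_nonneg fun i _ => sum_nonneg fun j _ => by split_ifs <;> positivity

/-- For `θ > 1`, the supremum over graphs with maximum clique size `k` equals `φ_θ(k)`:
the supremum is attained at the complete graph on `k` vertices. -/
theorem phiHat_eq_phiVar (θ : ℝ) (hθ : 1 < θ) (k : ℕ) (hk : 2 ≤ k) :
    phiHat θ k = phiVar θ k :=
  phiHat_eq_phiVar_general θ hθ k
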